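/- arXiv:2207.08252 — 2 statements merged into one kernel-verified Lean document; each statement's English description precedes it below -/
import Mathlib

section
/- Let m₀ be a 2π-periodic trigonometric polynomial with m₀(0) = 1 satisfying |m₀(ξ)|² + |m₀(ξ+π)|² ≤ 1 for all ξ. Define m₁(ξ) = e^{iξ} · conj(m₀(ξ+π)), m₂(ξ) = b(ξ)cos(ξ/2), m₃(ξ) = e^{iξ} · conj(m₂(ξ+π)), where b is a trigonometric polynomial satisfying |b(ξ)|² = 1 - |m₀(ξ)|² - |m₀(ξ+π)|². Then ∑_{r=0}^{3} |m_r(ξ)|² = 1 for all ξ. -/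
open Real Complex Finset

/-- A (complex) trigonometric polynomial: a finite linear combination of `e^{ikξ}`, `k ∈ ℤ`. -/
def IsTrigPoly (f : ℝ → ℂ) : Prop :=
  ∃ (n : ℕ) (c : ℤ → ℂ), ∀ ξ : ℝ,
    f ξ = ∑ k ∈ Finset.Icc (-(n : ℤ)) (n : ℤ), c k * Complex.exp (k * ξ * Complex.I)

/-!
The maps `ξ ↦ e^{iξ} conj (f (ξ + π))` have the same modulus as `f (· + π)`, so the four terms
pair up as `|m₀ ξ|² + |m₀ (ξ+π)|²` and `|m₂ ξ|² + |m₂ (ξ+π)|²`. Since `m₀` is `2π`-periodic, the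
right-hand side defining `|b|²` is `π`-periodic, hence so is `|b|²`, and then
`cos² (ξ/2) + cos² ((ξ+π)/2) = 1` turns the second pair into `|b ξ|² = 1 - |m₀ ξ|² - |m₀ (ξ+π)|²`.
-/

theorem norm_exp_ofReal_mul_I_mul_conj (x : ℝ) (z : ℂ) :
    ‖Complex.exp (x * Complex.I) * starRingEnd ℂ z‖ = ‖z‖ := by
  rw [norm_mul, Complex.norm_exp_ofReal_mul_I, one_mul, RCLike.norm_conj]

theorem cos_sq_half_add_pi (ξ : ℝ) : Real.cos ((ξ + π) / 2) ^ 2 = Real.sin (ξ / 2) ^ 2 := by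
  rw [add_div, Real.cos_add_pi_div_two, neg_sq]

theorem norm_sq_add_pi_of_periodic {m b : ℝ → ℂ} (hper : Function.Periodic m (2 * π))
    (hb : ∀ ξ : ℝ, ‖b ξ‖ ^ 2 = 1 - ‖m ξ‖ ^ 2 - ‖m (ξ + π)‖ ^ 2) (ξ : ℝ) :
    ‖b (ξ + π)‖ ^ 2 = ‖b ξ‖ ^ 2 := by
  rw [hb, hb, add_assoc, ← two_mul, hper]
  ring

theorem norm_mul_cos_half_sq_add_pi {b : ℝ → ℂ} {ξ : ℝ}
    (hb : ‖b (ξ + π)‖ ^ 2 = ‖b ξ‖ ^ 2) :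
    ‖b ξ * Real.cos (ξ / 2)‖ ^ 2 + ‖b (ξ + π) * Real.cos ((ξ + π) / 2)‖ ^ 2 = ‖b ξ‖ ^ 2 := by
  simp only [norm_mul, Complex.norm_real, Real.norm_eq_abs, mul_pow, sq_abs]
  rw [hb, cos_sq_half_add_pi, ← mul_add, Real.cos_sq_add_sin_sq, mul_one]

theorem stmt1_general (m₀ m₁ m₂ m₃ b : ℝ → ℂ)
    (hper : ∀ ξ : ℝ, m₀ (ξ + 2 * π) = m₀ ξ)
    (hb : ∀ ξ : ℝ, ‖b ξ‖ ^ 2 = 1 - ‖m₀ ξ‖ ^ 2 - ‖m₀ (ξ + π)‖ ^ 2)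
    (hm₁ : ∀ ξ : ℝ, m₁ ξ = Complex.exp (ξ * Complex.I) * starRingEnd ℂ (m₀ (ξ + π)))
    (hm₂ : ∀ ξ : ℝ, m₂ ξ = b ξ * Real.cos (ξ / 2))
    (hm₃ : ∀ ξ : ℝ, m₃ ξ = Complex.exp (ξ * Complex.I) * starRingEnd ℂ (m₂ (ξ + π))) :
    ∀ ξ : ℝ, ‖m₀ ξ‖ ^ 2 + ‖m₁ ξ‖ ^ 2 + ‖m₂ ξ‖ ^ 2 + ‖m₃ ξ‖ ^ 2 = 1 := by
  intro ξ
  have h₂₃ : ‖m₂ ξ‖ ^ 2 + ‖m₂ (ξ + π)‖ ^ 2 = ‖b ξ‖ ^ 2 := by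
    rw [hm₂, hm₂]
    exact norm_mul_cos_half_sq_add_pi (norm_sq_add_pi_of_periodic hper hb ξ)
  rw [hm₁, hm₃, norm_exp_ofReal_mul_I_mul_conj, norm_exp_ofReal_mul_I_mul_conj, add_assoc, h₂₃, hb]
  ring

theorem stmt1 (m₀ m₁ m₂ m₃ b : ℝ → ℂ)
    (hm₀poly : IsTrigPoly m₀)
    (hper : ∀ ξ : ℝ, m₀ (ξ + 2 * π) = m₀ ξ)
    (hm₀0 : m₀ 0 = 1)
    (hineq : ∀ ξ : ℝ, ‖m₀ ξ‖ ^ 2 + ‖m₀ (ξ + π)‖ ^ 2 ≤ 1)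
    (hbpoly : IsTrigPoly b)
    (hb : ∀ ξ : ℝ, ‖b ξ‖ ^ 2 = 1 - ‖m₀ ξ‖ ^ 2 - ‖m₀ (ξ + π)‖ ^ 2)
    (hm₁ : ∀ ξ : ℝ, m₁ ξ = Complex.exp (ξ * Complex.I) * starRingEnd ℂ (m₀ (ξ + π)))
    (hm₂ : ∀ ξ : ℝ, m₂ ξ = b ξ * Real.cos (ξ / 2))
    (hm₃ : ∀ ξ : ℝ, m₃ ξ = Complex.exp (ξ * Complex.I) * starRingEnd ℂ (m₂ (ξ + π))) :
    ∀ ξ : ℝ, ‖m₀ ξ‖ ^ 2 + ‖m₁ ξ‖ ^ 2 + ‖m₂ ξ‖ ^ 2 + ‖m₃ ξ‖ ^ 2 = 1 :=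
  stmt1_general m₀ m₁ m₂ m₃ b hper hb hm₁ hm₂ hm₃
end

section
/- Let f₁ : ℝ → ℝ be continuous and 2π-periodic, J ∈ ℕ, and ε₁ > 0. If T₁ is a trigonometric polynomial with ‖f₁ - T₁‖_∞ < ε₁/2, then there exists a trigonometric polynomial T₂ of the form ∑_j α_j cos(N_j ξ) + ∑_j β_j sin(K_j ξ) with ‖T₂‖_∞ < ε₁/2 such that the derivatives satisfy (T₁+T₂)^{(j)}(0) = 0 for j = 1,…,J. -/
/-!
Since `T₂^{(j)}(0)` equals `(∑ α_i N_i^j) cos^{(j)}(0) + (∑ β_i K_i^j) sin^{(j)}(0)`, the even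
derivatives only see the cosine part and the odd ones only the sine part, so the conditions
`(T₁ + T₂)^{(j)}(0) = 0` become two linear systems `∑ α_i N_i^{2r+2} = c_r`, `∑ β_i K_i^{2r+1} = c'_r`.
These are transposed Vandermonde systems; taking the frequencies `M (i + 1)` with `M` large, the
solutions have `ℓ¹`-norm `O(1/M)`, and `‖T₂‖_∞ ≤ ∑ |α_i| + ∑ |β_i|`.
-/

open Real Finset Matrix

/-- A real trigonometric polynomial. -/
def IsRealTrigPoly (f : ℝ → ℝ) : Prop :=
  ∃ (n : ℕ) (a b : ℕ → ℝ), ∀ ξ : ℝ,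
    f ξ = ∑ k ∈ Finset.range (n + 1), (a k * Real.cos (k * ξ) + b k * Real.sin (k * ξ))

theorem exists_pow_sum_eq_of_injOn {m : ℕ} {v : ℕ → ℝ} (hv : Set.InjOn v (range m)) :
    ∃ C ≥ 0, ∀ c : ℕ → ℝ, ∃ u : ℕ → ℝ,
      (∀ r < m, ∑ i ∈ range m, u i * v i ^ r = c r) ∧
        ∑ i ∈ range m, |u i| ≤ C * ∑ r ∈ range m, |c r| := by
  set V := Matrix.vandermonde fun i : Fin m => v i
  have hV : IsUnit V.det := by
    refine (Matrix.det_vandermonde_ne_zero_iff.mpr fun i j hij => Fin.ext ?_).isUnit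
    exact hv (by simp) (by simp) hij
  refine ⟨∑ r : Fin m, ∑ i : Fin m, |V⁻¹ r i|, by positivity, fun c => ?_⟩
  set u : Fin m → ℝ := (fun r : Fin m => c r) ᵥ* V⁻¹
  have hu : u ᵥ* V = fun r : Fin m => c r := by
    rw [Matrix.vecMul_vecMul, Matrix.nonsing_inv_mul _ hV, Matrix.vecMul_one]
  refine ⟨Function.extend Fin.val u 0, fun r hr => ?_, ?_⟩
  · simpa [← Fin.sum_univ_eq_sum_range, Fin.val_injective.extend_apply, Matrix.vecMul, V,
      dotProduct] using congrFun hu ⟨r, hr⟩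
  · simp only [← Fin.sum_univ_eq_sum_range, Fin.val_injective.extend_apply]
    set S := ∑ r : Fin m, |c r|
    calc ∑ i, |u i| ≤ ∑ i : Fin m, ∑ r : Fin m, |c r| * |V⁻¹ r i| := by
          refine sum_le_sum fun i _ => ?_
          simpa [u, Matrix.vecMul, dotProduct, abs_mul] using
            abs_sum_le_sum_abs (fun r : Fin m => c r * V⁻¹ r i) univ
      _ ≤ ∑ i : Fin m, ∑ r : Fin m, S * |V⁻¹ r i| := by
          gcongr with i _ r
          exact single_le_sum (f := fun r : Fin m => |c r|) (fun _ _ => abs_nonneg _) (mem_univ r)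
      _ = (∑ r : Fin m, ∑ i : Fin m, |V⁻¹ r i|) * S := by
          rw [sum_comm, sum_mul]; simp only [mul_sum, mul_comm]

theorem exists_small_pow_sum_eq (m : ℕ) {s : ℕ} (hs : s ≠ 0) (c : ℕ → ℝ) {δ : ℝ} (hδ : 0 < δ) :
    ∃ (γ : ℕ → ℝ) (K : ℕ → ℕ), ∑ i ∈ range m, |γ i| < δ ∧
      ∀ r < m, ∑ i ∈ range m, γ i * (K i : ℝ) ^ (2 * r + s) = c r := by
  have hv : Set.InjOn (fun i : ℕ => ((i : ℝ) + 1) ^ 2) (range m) := fun i _ j _ hij => by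
    have : ((i : ℝ) + 1) = j + 1 := by simpa [sq_eq_sq₀, add_nonneg] using hij
    exact_mod_cast add_right_cancel this
  obtain ⟨C, hC, hsolve⟩ := exists_pow_sum_eq_of_injOn hv
  set S := ∑ r ∈ range m, |c r|
  obtain ⟨M, hM⟩ := exists_nat_gt (C * S / δ)
  have hM0 : (0 : ℝ) < M := lt_of_le_of_lt (by positivity) hM
  have hM1 : 1 ≤ M := Nat.one_le_iff_ne_zero.mpr (by rintro rfl; simp at hM0)
  -- Scaling the nodes `(i + 1) ^ 2` by `M ^ 2` divides the solution by `M ^ (2 * r)`,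
  -- while the extra factor `K i ^ s ≥ M` in the denominator makes the coefficients small.
  obtain ⟨u, hu, hu_le⟩ := hsolve fun r => c r / (M : ℝ) ^ (2 * r)
  set K : ℕ → ℕ := fun i => M * (i + 1)
  have hK : ∀ i, (M : ℝ) ≤ (K i : ℝ) ^ s := fun i => by
    exact_mod_cast (Nat.le_mul_of_pos_right M i.succ_pos).trans (Nat.le_self_pow hs _)
  refine ⟨fun i => u i / (K i : ℝ) ^ s, K, ?_, fun r hr => ?_⟩
  · calc ∑ i ∈ range m, |u i / (K i : ℝ) ^ s| ≤ ∑ i ∈ range m, |u i| / M := by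
          refine sum_le_sum fun i _ => ?_
          rw [abs_div, abs_of_pos (hM0.trans_le (hK i))]
          exact div_le_div_of_nonneg_left (abs_nonneg _) hM0 (hK i)
      _ ≤ C * S / M := by
          rw [← sum_div]
          refine div_le_div_of_nonneg_right (hu_le.trans (mul_le_mul_of_nonneg_left ?_ hC)) hM0.le
          refine sum_le_sum fun r _ => ?_
          rw [abs_div, abs_of_pos (pow_pos hM0 _)]
          exact div_le_self (abs_nonneg _) (one_le_pow₀ (Nat.one_le_cast.mpr hM1))
      _ < δ := by rwa [div_lt_iff₀ hM0, ← div_lt_iff₀' hδ]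
  · calc ∑ i ∈ range m, u i / (K i : ℝ) ^ s * (K i : ℝ) ^ (2 * r + s)
        = (M : ℝ) ^ (2 * r) * ∑ i ∈ range m, u i * (((i : ℝ) + 1) ^ 2) ^ r := by
          rw [mul_sum]
          refine sum_congr rfl fun i _ => ?_
          have hKi : (K i : ℝ) = M * (i + 1) := by push_cast [K]; ring
          have hKs : (K i : ℝ) ^ s ≠ 0 := (hM0.trans_le (hK i)).ne'
          rw [pow_add, div_mul_eq_mul_div, mul_div_assoc, mul_div_cancel_right₀ _ hKs, hKi,
            mul_pow, pow_mul ((i : ℝ) + 1)]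
          ring
      _ = c r := by rw [hu r hr]; field_simp

theorem abs_sum_mul_le_sum_abs {ι : Type*} (s : Finset ι) (a f : ι → ℝ)
    (hf : ∀ i ∈ s, |f i| ≤ 1) : |∑ i ∈ s, a i * f i| ≤ ∑ i ∈ s, |a i| :=
  (abs_sum_le_sum_abs _ _).trans <| sum_le_sum fun i hi => by
    rw [abs_mul]
    exact mul_le_of_le_one_right (abs_nonneg _) (hf i hi)

theorem IsRealTrigPoly.contDiff {f : ℝ → ℝ} (hf : IsRealTrigPoly f) {n : WithTop ℕ∞} :
    ContDiff ℝ n f := by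
  obtain ⟨N, a, b, hf⟩ := hf
  rw [funext hf]
  fun_prop

theorem iteratedDeriv_sum_mul_comp_const_mul {ι : Type*} (s : Finset ι) (α a : ι → ℝ)
    {n : ℕ} {f : ℝ → ℝ} (hf : ContDiff ℝ n f) (x : ℝ) :
    iteratedDeriv n (fun ξ => ∑ i ∈ s, α i * f (a i * ξ)) x =
      ∑ i ∈ s, α i * a i ^ n * iteratedDeriv n f (a i * x) := by
  have hfi : ∀ i ∈ s, ContDiffAt ℝ n (fun ξ => α i * f (a i * ξ)) x := fun i _ =>
    (contDiff_const.mul (hf.comp (contDiff_const.mul contDiff_id))).contDiffAt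
  rw [iteratedDeriv_fun_sum hfi]
  refine sum_congr rfl fun i _ => ?_
  rw [iteratedDeriv_const_mul_field, iteratedDeriv_comp_const_mul hf, mul_assoc]

theorem iteratedDeriv_cos_sum_add_sin_sum_zero {ι : Type*} (s : Finset ι) (α β a b : ι → ℝ)
    (n : ℕ) :
    iteratedDeriv n (fun ξ => ∑ i ∈ s, α i * cos (a i * ξ) + ∑ i ∈ s, β i * sin (b i * ξ)) 0 =
      (∑ i ∈ s, α i * a i ^ n) * iteratedDeriv n cos 0 +
        (∑ i ∈ s, β i * b i ^ n) * iteratedDeriv n sin 0 := by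
  rw [iteratedDeriv_fun_add (by fun_prop) (by fun_prop),
    iteratedDeriv_sum_mul_comp_const_mul _ _ _ contDiff_cos,
    iteratedDeriv_sum_mul_comp_const_mul _ _ _ contDiff_sin]
  simp only [mul_zero, sum_mul]

theorem stmt13_general (J : ℕ) (ε₁ : ℝ) (hε₁ : 0 < ε₁)
    (T₁ : ℝ → ℝ) (hT₁ : IsRealTrigPoly T₁) :
    ∃ (p : ℕ) (α β : ℕ → ℝ) (N K : ℕ → ℕ),
      let T₂ : ℝ → ℝ := fun ξ =>
        (∑ j ∈ Finset.range p, α j * Real.cos ((N j : ℝ) * ξ)) +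
        (∑ j ∈ Finset.range p, β j * Real.sin ((K j : ℝ) * ξ))
      (∀ ξ : ℝ, |T₂ ξ| < ε₁ / 2) ∧
      ∀ j : ℕ, 1 ≤ j → j ≤ J → iteratedDeriv j (fun ξ => T₁ ξ + T₂ ξ) 0 = 0 := by
  set d : ℕ → ℝ := fun j => iteratedDeriv j T₁ 0
  have hε : 0 < ε₁ / 4 := by positivity
  obtain ⟨α, N, hα, hαN⟩ :=
    exists_small_pow_sum_eq J two_ne_zero (fun r => (-1) ^ r * d (2 * r + 2)) hε
  obtain ⟨β, K, hβ, hβK⟩ :=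
    exists_small_pow_sum_eq J one_ne_zero (fun r => -(-1) ^ r * d (2 * r + 1)) hε
  have hsign : ∀ r : ℕ, (-1 : ℝ) ^ r * (-1) ^ r = 1 := fun r => by rw [← mul_pow]; norm_num
  refine ⟨J, α, β, N, K, fun ξ => ?_, fun j hj hjJ => ?_⟩
  · calc _ ≤ ∑ j ∈ range J, |α j| + ∑ j ∈ range J, |β j| :=
          (abs_add_le _ _).trans <| add_le_add
            (abs_sum_mul_le_sum_abs _ _ _ fun _ _ => abs_cos_le_one _)
            (abs_sum_mul_le_sum_abs _ _ _ fun _ _ => abs_sin_le_one _)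
      _ < ε₁ / 4 + ε₁ / 4 := add_lt_add hα hβ
      _ = ε₁ / 2 := by ring
  · rw [iteratedDeriv_fun_add hT₁.contDiff.contDiffAt (by fun_prop),
      iteratedDeriv_cos_sum_add_sin_sum_zero]
    obtain ⟨r, rfl | rfl⟩ : ∃ r, j = 2 * r + 2 ∨ j = 2 * r + 1 :=
      ⟨(j - 1) / 2, by omega⟩
    · rw [hαN r (by omega), show 2 * r + 2 = 2 * (r + 1) by ring]
      simp only [iteratedDeriv_even_cos, iteratedDeriv_even_sin, pow_succ, Pi.mul_apply,
        Pi.neg_apply, Pi.pow_apply, Pi.one_apply, cos_zero, sin_zero, mul_neg, mul_one, mul_zero,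
        add_zero]
      linear_combination -d (2 * (r + 1)) * hsign r
    · rw [hβK r (by omega)]
      simp only [iteratedDeriv_add_one_cos, iteratedDeriv_add_one_sin, iteratedDeriv_even_cos,
        iteratedDeriv_even_sin, Pi.mul_apply, Pi.neg_apply, Pi.pow_apply, Pi.one_apply, cos_zero,
        sin_zero, mul_one, mul_zero, neg_zero, neg_mul, zero_add]
      linear_combination -d (2 * r + 1) * hsign r

theorem stmt13 (f₁ : ℝ → ℝ) (hf₁ : Continuous f₁)
    (hper : ∀ ξ : ℝ, f₁ (ξ + 2 * π) = f₁ ξ)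
    (J : ℕ) (ε₁ : ℝ) (hε₁ : 0 < ε₁)
    (T₁ : ℝ → ℝ) (hT₁ : IsRealTrigPoly T₁)
    (happrox : ∀ ξ : ℝ, |f₁ ξ - T₁ ξ| < ε₁ / 2) :
    ∃ (p : ℕ) (α β : ℕ → ℝ) (N K : ℕ → ℕ),
      let T₂ : ℝ → ℝ := fun ξ =>
        (∑ j ∈ Finset.range p, α j * Real.cos ((N j : ℝ) * ξ)) +
        (∑ j ∈ Finset.range p, β j * Real.sin ((K j : ℝ) * ξ))
      (∀ ξ : ℝ, |T₂ ξ| < ε₁ / 2) ∧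
      ∀ j : ℕ, 1 ≤ j → j ≤ J → iteratedDeriv j (fun ξ => T₁ ξ + T₂ ξ) 0 = 0 :=
  stmt13_general J ε₁ hε₁ T₁ hT₁
end
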